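/- Let G be a finite simple graph whose oriented edges are labeled by elements of a group Γ, with nonnegative edge weights x, such that every inconsistent cycle of G has total weight at least 1, and let 0 < δ ≤ 1. Let C be an inconsistent cycle in G and let v0 be a vertex of C. If d_x(v0, v) ≤ (1 − δ)/2 for every vertex v of C, then C contains an edge e with x_e ≥ δ. -/

import Mathlib

open SimpleGraph

/-!
Inconsistent closed walks reduce to inconsistent cycles: a closed walk that is not a cycle either
backtracks along a single edge (and is consistent) or splits at a repeated vertex into two shorter
closed walks, at least one of them inconsistent. So every inconsistent closed walk has weight
at least `1`.

If every edge of `C` were lighter than `δ`, let `m < δ` be its heaviest edge weight and pick, for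
each vertex `v` of `C`, a walk `Q v` from `v0` of weight `< (1 - m) / 2`. For an edge `ab` of `C`
the closed walk `Q a`, `ab`, `(Q b)⁻¹` weighs `< 1`, hence is consistent, i.e.
`g a b = ℓ b * (ℓ a)⁻¹` with `ℓ v` the label of `Q v`. The label of `C` then telescopes to `1`.
-/

/-- The weight of a walk: the sum of the weights of its edges, counted with multiplicity. -/
def walkWeight {V : Type*} {G : SimpleGraph V} (x : Sym2 V → ℝ) {u v : V}
    (p : G.Walk u v) : ℝ :=
  (p.edges.map x).sum

/-- The shortest-path distance between `u` and `v` induced by the edge weights `x`. -/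
noncomputable def wdist {V : Type*} (G : SimpleGraph V) (x : Sym2 V → ℝ) (u v : V) : ℝ :=
  sInf {r | ∃ p : G.Walk u v, walkWeight x p = r}

/-- The label of a walk `(v_0, v_1, …, v_l)`:
the product `g_{v_{l-1} v_l} ⋯ g_{v_1 v_2} · g_{v_0 v_1}`. -/
def walkLabel {V : Type*} {Γ : Type*} [Group Γ] {G : SimpleGraph V} (g : V → V → Γ)
    {u v : V} (p : G.Walk u v) : Γ :=
  ((p.darts.map (fun d => g d.fst d.snd)).reverse).prod

namespace SimpleGraph.Walk

variable {V : Type*} {G : SimpleGraph V}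

lemma exists_eq_append_loop_of_not_isPath {u v : V} (p : G.Walk u v) (hp : ¬p.IsPath) :
    ∃ (w : V) (q : G.Walk u w) (c : G.Walk w w) (r : G.Walk w v),
      ¬c.Nil ∧ p = q.append (c.append r) := by
  classical
  induction p with
  | nil => exact absurd IsPath.nil hp
  | @cons u _ _ h p ih =>
    by_cases hpath : p.IsPath
    · have hu : u ∈ p.support := by simpa [cons_isPath_iff, hpath] using hp
      exact ⟨u, nil, cons h (p.takeUntil u hu), p.dropUntil u hu, not_nil_cons,
        by simp [p.take_spec hu]⟩
    · obtain ⟨w, q, c, r, hc, rfl⟩ := ih hpath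
      exact ⟨w, cons h q, c, r, hc, rfl⟩

lemma IsPath.exists_eq_toWalk_of_mem_edges {u v : V} {p : G.Walk u v} (hp : p.IsPath)
    (he : s(u, v) ∈ p.edges) : ∃ h : G.Adj u v, p = h.toWalk := by
  cases p with
  | nil => simp at he
  | cons h q =>
    rw [cons_isPath_iff] at hp
    rw [edges_cons, List.mem_cons] at he
    rcases he with he | he
    · rcases Sym2.eq_iff.mp he with ⟨-, rfl⟩ | ⟨rfl, -⟩
      · exact ⟨h, by rw [(isPath_iff_nil.mp hp.1).eq_nil]⟩
      · exact (G.irrefl h).elim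
    · exact absurd (q.fst_mem_support_of_mem_edges he) hp.2

end SimpleGraph.Walk

open SimpleGraph.Walk

section LabelsAndWeights

variable {V : Type*} {Γ : Type*} [Group Γ] {G : SimpleGraph V}

@[simp] lemma walkLabel_nil (g : V → V → Γ) {u : V} :
    walkLabel g (Walk.nil : G.Walk u u) = 1 := rfl

@[simp] lemma walkLabel_cons (g : V → V → Γ) {u v w : V} (h : G.Adj u v) (p : G.Walk v w) :
    walkLabel g (Walk.cons h p) = walkLabel g p * g u v := by
  simp [walkLabel]

@[simp] lemma walkLabel_append (g : V → V → Γ) {u v w : V} (p : G.Walk u v) (q : G.Walk v w) :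
    walkLabel g (p.append q) = walkLabel g q * walkLabel g p := by
  simp [walkLabel]

lemma walkLabel_reverse (g : V → V → Γ) (hg : ∀ u v, G.Adj u v → g v u = (g u v)⁻¹)
    {u v : V} (p : G.Walk u v) : walkLabel g p.reverse = (walkLabel g p)⁻¹ := by
  induction p with
  | nil => simp
  | cons h p ih => simp [ih, hg _ _ h]

lemma walkLabel_eq_of_forall_dart (g : V → V → Γ) (ℓ : V → Γ) {a b : V} (W : G.Walk a b)
    (hW : ∀ d ∈ W.darts, g d.fst d.snd = ℓ d.snd * (ℓ d.fst)⁻¹) :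
    walkLabel g W = ℓ b * (ℓ a)⁻¹ := by
  induction W with
  | nil => simp
  | @cons u v _ h p ih =>
    rw [walkLabel_cons, ih fun d hd => hW d (by simp [hd]), hW ⟨(u, v), h⟩ (by simp)]
    group

@[simp] lemma walkWeight_cons (x : Sym2 V → ℝ) {u v w : V} (h : G.Adj u v) (p : G.Walk v w) :
    walkWeight x (Walk.cons h p) = x s(u, v) + walkWeight x p := by
  simp [walkWeight]

@[simp] lemma walkWeight_append (x : Sym2 V → ℝ) {u v w : V} (p : G.Walk u v) (q : G.Walk v w) :
    walkWeight x (p.append q) = walkWeight x p + walkWeight x q := by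
  simp [walkWeight]

@[simp] lemma walkWeight_reverse (x : Sym2 V → ℝ) {u v : V} (p : G.Walk u v) :
    walkWeight x p.reverse = walkWeight x p := by
  simp [walkWeight, List.sum_reverse]

lemma walkWeight_nonneg {x : Sym2 V → ℝ} (hx : ∀ e ∈ G.edgeSet, 0 ≤ x e)
    {u v : V} (p : G.Walk u v) : 0 ≤ walkWeight x p :=
  List.sum_nonneg <| by
    simpa using fun e he => hx e (p.edges_subset_edgeSet he)

lemma exists_walkWeight_lt_of_wdist_lt (x : Sym2 V → ℝ) {u v : V} (huv : G.Reachable u v)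
    {r : ℝ} (h : wdist G x u v < r) : ∃ p : G.Walk u v, walkWeight x p < r := by
  obtain ⟨p₀⟩ := huv
  obtain ⟨_, ⟨p, rfl⟩, hp⟩ := exists_lt_of_csInf_lt
    (s := {r | ∃ p : G.Walk u v, walkWeight x p = r}) ⟨_, p₀, rfl⟩ h
  exact ⟨p, hp⟩

end LabelsAndWeights

section InconsistentClosedWalks

variable {V : Type*} {Γ : Type*} [Group Γ] {G : SimpleGraph V} {g : V → V → Γ}
  {x : Sym2 V → ℝ}

lemma one_le_walkWeight_of_walkLabel_ne_one (hg : ∀ u v, G.Adj u v → g v u = (g u v)⁻¹)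
    (hx : ∀ e ∈ G.edgeSet, 0 ≤ x e)
    (hincons : ∀ (v : V) (C : G.Walk v v), C.IsCycle → walkLabel g C ≠ 1 →
      1 ≤ walkWeight x C)
    {v : V} (W : G.Walk v v) (hW : walkLabel g W ≠ 1) : 1 ≤ walkWeight x W := by
  induction hn : W.length using Nat.strong_induction_on generalizing v with
  | _ n ih =>
  cases W with
  | nil => exact absurd rfl hW
  | @cons _ u _ hvu p =>
    by_cases hcyc : (cons hvu p).IsCycle
    · exact hincons v _ hcyc hW
    by_cases hpath : p.IsPath
    · have he : s(u, v) ∈ p.edges := by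
        simpa [cons_isCycle_iff, hpath, Sym2.eq_swap] using hcyc
      obtain ⟨huv, rfl⟩ := hpath.exists_eq_toWalk_of_mem_edges he
      exact absurd (by simp [Adj.toWalk, hg _ _ huv]) hW
    · obtain ⟨w, q, c, r, hc, rfl⟩ := p.exists_eq_append_loop_of_not_isPath hpath
      have hc_pos : 0 < c.length := not_nil_iff_lt_length.mp hc
      have hweight : walkWeight x (cons hvu (q.append (c.append r))) =
          walkWeight x c + walkWeight x (cons hvu (q.append r)) := by
        simp only [walkWeight_cons, walkWeight_append]
        ring
      rw [hweight]
      by_cases hc1 : walkLabel g c = 1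
      · have hout : walkLabel g (cons hvu (q.append r)) ≠ 1 := by
          simpa [hc1] using hW
        have := ih _ (by simp only [← hn, length_cons, length_append]; omega) _ hout rfl
        linarith [walkWeight_nonneg hx c]
      · have := ih _ (by simp only [← hn, length_cons, length_append]; omega) c hc1 rfl
        linarith [walkWeight_nonneg hx (cons hvu (q.append r))]

lemma eq_walkLabel_mul_inv_of_walkWeight_lt_one (hg : ∀ u v, G.Adj u v → g v u = (g u v)⁻¹)
    (hx : ∀ e ∈ G.edgeSet, 0 ≤ x e)
    (hincons : ∀ (v : V) (C : G.Walk v v), C.IsCycle → walkLabel g C ≠ 1 →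
      1 ≤ walkWeight x C)
    {w a b : V} (p : G.Walk w a) (q : G.Walk w b) (h : G.Adj a b)
    (hlt : walkWeight x p + x s(a, b) + walkWeight x q < 1) :
    g a b = walkLabel g q * (walkLabel g p)⁻¹ := by
  have hT : walkLabel g (p.append (cons h q.reverse)) = 1 := by
    by_contra hT
    have := one_le_walkWeight_of_walkLabel_ne_one hg hx hincons _ hT
    simp only [walkWeight_append, walkWeight_cons, walkWeight_reverse] at this
    linarith
  rw [walkLabel_append, walkLabel_cons, walkLabel_reverse g hg, mul_eq_one_iff_eq_inv,
    inv_mul_eq_iff_eq_mul] at hT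
  exact hT

end InconsistentClosedWalks

theorem stmt7_general {V : Type*} {Γ : Type*} [Group Γ] (G : SimpleGraph V)
    (g : V → V → Γ) (hg : ∀ u v, G.Adj u v → g v u = (g u v)⁻¹)
    (x : Sym2 V → ℝ) (δ : ℝ)
    (hx : ∀ e ∈ G.edgeSet, 0 ≤ x e)
    (hincons : ∀ (v : V) (C : G.Walk v v), C.IsCycle → walkLabel g C ≠ 1 →
      1 ≤ walkWeight x C)
    (v0 : V) (C : G.Walk v0 v0) (hC : C.IsCycle) (hCincons : walkLabel g C ≠ 1)
    (hnear : ∀ v ∈ C.support, wdist G x v0 v ≤ (1 - δ) / 2) :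
    ∃ e ∈ C.edges, δ ≤ x e := by
  classical
  by_contra! hlight
  obtain ⟨e₀, he₀, hmax⟩ := C.edges.toFinset.exists_max_image x (by simpa using hC.not_nil)
  have hQ (v : V) (hv : v ∈ C.support) : ∃ p : G.Walk v0 v, walkWeight x p < (1 - x e₀) / 2 :=
    exists_walkWeight_lt_of_wdist_lt x ⟨C.takeUntil v hv⟩ <|
      (hnear v hv).trans_lt (by linarith [hlight e₀ (List.mem_toFinset.mp he₀)])
  choose Q hQ using hQ
  let ℓ v := if hv : v ∈ C.support then walkLabel g (Q v hv) else 1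
  have hdart (d : G.Dart) (hd : d ∈ C.darts) : g d.fst d.snd = ℓ d.snd * (ℓ d.fst)⁻¹ := by
    have ha := C.dart_fst_mem_support_of_mem_darts hd
    have hb := C.dart_snd_mem_support_of_mem_darts hd
    have hd_le : x s(d.fst, d.snd) ≤ x e₀ :=
      hmax _ (List.mem_toFinset.mpr (List.mem_map_of_mem hd))
    simp only [ℓ, dif_pos ha, dif_pos hb]
    exact eq_walkLabel_mul_inv_of_walkWeight_lt_one hg hx hincons (Q _ ha) (Q _ hb) d.adj
      (by linarith [hQ _ ha, hQ _ hb])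
  exact hCincons (by simpa using walkLabel_eq_of_forall_dart g ℓ C hdart)

/-- If every inconsistent cycle has total weight at least 1, `0 < δ ≤ 1`, and `C` is an
inconsistent cycle based at `v0` with `d_x(v0, v) ≤ (1 - δ)/2` for every vertex `v` of `C`,
then `C` contains an edge of weight at least `δ`. -/
theorem stmt7 {V : Type*} [Fintype V] {Γ : Type*} [Group Γ] (G : SimpleGraph V)
    (g : V → V → Γ) (hg : ∀ u v, G.Adj u v → g v u = (g u v)⁻¹)
    (x : Sym2 V → ℝ) (δ : ℝ) (hδ0 : 0 < δ) (hδ1 : δ ≤ 1)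
    (hx : ∀ e ∈ G.edgeSet, 0 ≤ x e)
    (hincons : ∀ (v : V) (C : G.Walk v v), C.IsCycle → walkLabel g C ≠ 1 →
      1 ≤ walkWeight x C)
    (v0 : V) (C : G.Walk v0 v0) (hC : C.IsCycle) (hCincons : walkLabel g C ≠ 1)
    (hnear : ∀ v ∈ C.support, wdist G x v0 v ≤ (1 - δ) / 2) :
    ∃ e ∈ C.edges, δ ≤ x e :=
  stmt7_general G g hg x δ hx hincons v0 C hC hCincons hnear
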